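/- arXiv:2304.10094 — 2 statements merged into one kernel-verified Lean document; each statement's English description precedes it below -/
import Mathlib

section
/- Let P_{m,k} be a generalized Petersen graph (m ≥ 3, k ≥ 1) of order 2m and T a tree of order n; let d_p = diam(P_{m,k}), d_t = diam(T), ε = ε(T). Suppose there exists an ordering z_0, z_1, …, z_{2mn−1} of the vertices of P_{m,k} □ T, with z_t = (x_{i_t}, y_{j_t}), such that for all 0 ≤ t ≤ 2mn − 2: (a) d_{P_{m,k}}(x_{i_t}, x_{i_{t+1}}) = d_p; (b) L_T(y_{j_0}) + L_T(y_{j_{2mn−1}}) = 0; (c) y_{j_t} and y_{j_{t+1}} are in different branches of T when |W(T)| = 1 and in opposite branches when |W(T)| = 2; and (d) the mapping f defined on the ordering by f(z_0) = 0 and f(z_{t+1}) = f(z_t) + d_t + ε − L_T(y_{j_t}) − L_T(y_{j_{t+1}}) is a radio labeling of P_{m,k} □ T. Then rn(P_{m,k} □ T) = (2mn − 1)(d_t + ε) − 4m·L(T). -/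
/-!
Common definitions: radio labelings, weight centers, levels, branches,
generalized Petersen graphs, stars.
-/

open Finset

namespace RadioPaper

variable {V : Type*}

/-- The diameter of a finite graph: the maximum distance between two vertices. -/
noncomputable def graphDiam [Fintype V] (G : SimpleGraph V) : ℕ :=
  Finset.univ.sup fun p : V × V => G.dist p.1 p.2

/-- A radio labeling of `G`: `|f u - f v| ≥ diam G + 1 - d(u,v)` for distinct `u, v`. -/
def IsRadioLabeling [Fintype V] (G : SimpleGraph V) (f : V → ℕ) : Prop :=
  ∀ u v : V, u ≠ v → (graphDiam G : ℤ) + 1 - G.dist u v ≤ |(f u : ℤ) - (f v : ℤ)|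

/-- The span of a labeling: the maximum of `|f u - f v|` over all pairs of vertices. -/
noncomputable def radioSpan [Fintype V] (f : V → ℕ) : ℕ :=
  Finset.univ.sup fun p : V × V => f p.1 - f p.2

/-- The radio number of `G`: the minimum span over all radio labelings. -/
noncomputable def radioNumber [Fintype V] (G : SimpleGraph V) : ℕ :=
  sInf {s : ℕ | ∃ f : V → ℕ, IsRadioLabeling G f ∧ radioSpan f = s}

/-- The weight of a graph at a vertex `u`: the sum of distances from `u` to all vertices. -/
noncomputable def weight [Fintype V] (T : SimpleGraph V) (u : V) : ℕ :=
  ∑ v : V, T.dist u v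

/-- The set of weight centers: vertices minimizing the weight. -/
def weightCenters [Fintype V] (T : SimpleGraph V) : Set V :=
  {c | ∀ u : V, weight T c ≤ weight T u}

/-- The level of a vertex: its distance to a nearest weight center. -/
noncomputable def level [Fintype V] (T : SimpleGraph V) (x : V) : ℕ :=
  sInf {d : ℕ | ∃ w ∈ weightCenters T, T.dist x w = d}

/-- The total level of `T`: sum of the levels of all vertices. -/
noncomputable def totalLevel [Fintype V] (T : SimpleGraph V) : ℕ :=
  ∑ x : V, level T x

/-- `ε(T) = 1` if `T` has a unique weight center, and `0` otherwise (two centers). -/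
noncomputable def eps [Fintype V] (T : SimpleGraph V) : ℕ :=
  if (weightCenters T).ncard = 1 then 1 else 0

/-- `z` is an ancestor of `x` in the tree rooted at its weight center(s):
`z` lies on the path from some weight center to `x`. -/
def IsAncestor [Fintype V] (T : SimpleGraph V) (z x : V) : Prop :=
  ∃ w ∈ weightCenters T, T.dist w z + T.dist z x = T.dist w x

/-- `φ_T(x,y)`: the maximum level of a common ancestor of `x` and `y`. -/
noncomputable def phi [Fintype V] (T : SimpleGraph V) (x y : V) : ℕ :=
  sSup {l : ℕ | ∃ z : V, IsAncestor T z x ∧ IsAncestor T z y ∧ level T z = l}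

/-- `x` and `y` are in opposite branches: `T` has two weight centers `w, w'` and
`x, y` lie in different components of `T - ww'`. -/
def OppositeBranches [Fintype V] (T : SimpleGraph V) (x y : V) : Prop :=
  ∃ w w' : V, w ≠ w' ∧ weightCenters T = {w, w'} ∧
    ¬ (T.deleteEdges {s(w, w')}).Reachable x y

open Classical in
/-- `δ_T(x,y) = 1` if `T` has two weight centers and `x, y` are in opposite branches,
and `0` otherwise. -/
noncomputable def delta [Fintype V] (T : SimpleGraph V) (x y : V) : ℕ :=
  if (weightCenters T).ncard = 2 ∧ OppositeBranches T x y then 1 else 0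

/-- `x` and `y` are in different branches: some weight center lies on the `x`–`y` path
(equivalently, the paths from the center to `x` and to `y` depart through different
neighbours, or one of `x, y` is a weight center). -/
def DifferentBranches [Fintype V] (T : SimpleGraph V) (x y : V) : Prop :=
  ∃ w ∈ weightCenters T, T.dist x w + T.dist w y = T.dist x y

/-- `x` and `y` are in the same branch: both belong to the branch of `T` induced by some
non-central neighbour `u` of a weight center `w` together with all of `u`'s descendants. -/
def SameBranch [Fintype V] (T : SimpleGraph V) (x y : V) : Prop :=
  ∃ w ∈ weightCenters T, ∃ u : V, u ∉ weightCenters T ∧ T.Adj w u ∧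
    T.dist w x = 1 + T.dist u x ∧ T.dist w y = 1 + T.dist u y

/-- The generalized Petersen graph `P_{m,k}`: outer vertices `(false, i)` (the `u_i`) and
inner vertices `(true, i)` (the `v_i`), with edges `u_i u_{i+1}`, `u_i v_i`, `v_i v_{i+k}`. -/
def genPetersen (m k : ℕ) : SimpleGraph (Bool × ZMod m) :=
  SimpleGraph.fromRel fun a b =>
    (a.1 = false ∧ b.1 = false ∧ b.2 = a.2 + 1) ∨
    (a.1 = false ∧ b.1 = true ∧ a.2 = b.2) ∨
    (a.1 = true ∧ b.1 = true ∧ b.2 = a.2 + (k : ZMod m))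

/-- The star `K_{1,n}`: vertex `0` is the centre, joined to the `n` leaves. -/
def starGraph (n : ℕ) : SimpleGraph (Fin (n + 1)) :=
  SimpleGraph.fromRel fun a _ => a = 0



section Aux
open SimpleGraph


lemma dist_split {G : SimpleGraph V} {u v w : V} (p : G.Walk u v) (hw : w ∈ p.support) :
    G.dist u w + G.dist w v ≤ p.length := by
  classical
  rw [← p.take_spec hw, SimpleGraph.Walk.length_append]
  exact Nat.add_le_add (SimpleGraph.dist_le _) (SimpleGraph.dist_le _)

lemma dist_one {G : SimpleGraph V} {a b : V} (h : G.Adj a b) : G.dist a b = 1 :=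
  SimpleGraph.dist_eq_one_iff_adj.2 h

variable {T : SimpleGraph V}

lemma tree_dist_ne (hT : T.IsTree) {a b : V} (h : T.Adj a b) (z : V) :
    T.dist z a ≠ T.dist z b := by
  intro hEq
  obtain ⟨Q, hQp, hQl⟩ := (hT.isConnected z a).exists_path_of_dist
  have hbQ : b ∉ Q.support := by
    intro hb
    have := dist_split Q hb
    rw [hQl, ← hEq] at this
    have h1 : T.dist b a = 1 := dist_one h.symm
    omega
  have hQ' : (Q.concat h).IsPath := by
    rw [← SimpleGraph.Walk.isPath_reverse_iff, SimpleGraph.Walk.reverse_concat]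
    exact (SimpleGraph.Walk.cons_isPath_iff _ _).2 ⟨(SimpleGraph.Walk.isPath_reverse_iff _).2 hQp,
      by simpa using hbQ⟩
  obtain ⟨R, hRp, hRl⟩ := (hT.isConnected z b).exists_path_of_dist
  obtain ⟨P, -, hPu⟩ := hT.existsUnique_path z b
  have h1 : Q.concat h = R := (hPu _ hQ').trans (hPu _ hRp).symm
  have h2 : (Q.concat h).length = R.length := by rw [h1]
  rw [SimpleGraph.Walk.length_concat, hQl, hRl, ← hEq] at h2
  omega

lemma tree_dist_step (hT : T.IsTree) {a b : V} (h : T.Adj a b) (z : V) :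
    T.dist z b = T.dist z a + 1 ∨ T.dist z a = T.dist z b + 1 := by
  have h1 : T.dist z b ≤ T.dist z a + T.dist a b := hT.isConnected.dist_triangle
  have h2 : T.dist z a ≤ T.dist z b + T.dist b a := hT.isConnected.dist_triangle
  rw [dist_one h] at h1
  rw [dist_one h.symm] at h2
  have := tree_dist_ne hT h z
  omega

/-- Unimodality/nesting: in a tree, if `a—b—c` is a path and `z` is closer to `c`
than to `b`, then `z` is closer to `b` than to `a`. -/
lemma tree_nesting (hT : T.IsTree) {a b c : V} (hab : T.Adj a b) (hbc : T.Adj b c)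
    (hac : a ≠ c) {z : V} (h1 : T.dist z c < T.dist z b) : T.dist z b < T.dist z a := by
  by_contra hcon
  have hba : T.dist z b = T.dist z a + 1 := by
    rcases tree_dist_step hT hab z with h' | h' <;> omega
  have hcb : T.dist z b = T.dist z c + 1 := by
    rcases tree_dist_step hT hbc z with h' | h' <;> omega
  obtain ⟨Q, hQp, hQl⟩ := (hT.isConnected z a).exists_path_of_dist
  obtain ⟨R, hRp, hRl⟩ := (hT.isConnected z c).exists_path_of_dist
  have hbQ : b ∉ Q.support := by
    intro hb
    have := dist_split Q hb
    rw [hQl] at this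
    have := dist_one (hab.symm)
    omega
  have hbR : b ∉ R.support := by
    intro hb
    have := dist_split R hb
    rw [hRl] at this
    have := dist_one (hbc)
    omega
  have hQ' : (Q.concat hab).IsPath := by
    rw [← SimpleGraph.Walk.isPath_reverse_iff, SimpleGraph.Walk.reverse_concat]
    exact (SimpleGraph.Walk.cons_isPath_iff _ _).2 ⟨(SimpleGraph.Walk.isPath_reverse_iff _).2 hQp,
      by simpa using hbQ⟩
  have hR' : (R.concat hbc.symm).IsPath := by
    rw [← SimpleGraph.Walk.isPath_reverse_iff, SimpleGraph.Walk.reverse_concat]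
    exact (SimpleGraph.Walk.cons_isPath_iff _ _).2 ⟨(SimpleGraph.Walk.isPath_reverse_iff _).2 hRp,
      by simpa using hbR⟩
  obtain ⟨P, -, hPu⟩ := hT.existsUnique_path z b
  have heq : Q.concat hab = R.concat hbc.symm := (hPu _ hQ').trans (hPu _ hR').symm
  have hedge : s(a, b) ∈ (R.concat hbc.symm).edges := by
    rw [← heq, SimpleGraph.Walk.edges_concat]
    simp
  rw [SimpleGraph.Walk.edges_concat, List.concat_eq_append, List.mem_append] at hedge
  rcases hedge with hedge | hedge
  · exact hbR (SimpleGraph.Walk.snd_mem_support_of_mem_edges R hedge)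
  · simp only [List.mem_singleton, Sym2.eq_iff] at hedge
    rcases hedge with ⟨h1', h2'⟩ | ⟨h1', h2'⟩
    · exact hac h1'
    · exact hab.ne h1'


section Weight
variable [Fintype V]

/-- Signed sum of distance differences across an (oriented) edge. -/
noncomputable def Dsum (T : SimpleGraph V) (a b : V) : ℤ :=
  ∑ z : V, ((T.dist z b : ℤ) - T.dist z a)

lemma weight_sub (T : SimpleGraph V) (a b : V) :
    (weight T b : ℤ) - weight T a = Dsum T a b := by
  unfold weight Dsum
  push_cast
  rw [Finset.sum_sub_distrib]
  congr 1 <;> · congr 1; ext z; rw [SimpleGraph.dist_comm]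

lemma Dsum_step (hT : T.IsTree) {a b c : V} (hab : T.Adj a b) (hbc : T.Adj b c)
    (hac : a ≠ c) : Dsum T a b + 2 ≤ Dsum T b c := by
  have key : ∀ z : V, ((T.dist z b : ℤ) - T.dist z a) ≤ ((T.dist z c : ℤ) - T.dist z b) := by
    intro z
    rcases tree_dist_step hT hbc z with h' | h'
    · rcases tree_dist_step hT hab z with h'' | h'' <;> push_cast [h', h''] <;> omega
    · -- dist z c < dist z b
      have h2 : T.dist z b < T.dist z a := tree_nesting hT hab hbc hac (by omega)
      rcases tree_dist_step hT hab z with h'' | h'' <;> push_cast [h'] <;> omega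
  have hb2 : ((T.dist b c : ℤ) - T.dist b b) - ((T.dist b b : ℤ) - T.dist b a) = 2 := by
    rw [SimpleGraph.dist_self, dist_one hbc, SimpleGraph.dist_comm, dist_one hab]
    norm_num
  have hsum : (2 : ℤ) ≤ ∑ z : V, (((T.dist z c : ℤ) - T.dist z b) - ((T.dist z b : ℤ) - T.dist z a)) := by
    calc (2:ℤ) = ((T.dist b c : ℤ) - T.dist b b) - ((T.dist b b : ℤ) - T.dist b a) := hb2.symm
    _ ≤ _ := Finset.single_le_sum (f := fun z => ((T.dist z c : ℤ) - T.dist z b) - ((T.dist z b : ℤ) - T.dist z a))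
        (fun z _ => by simpa using sub_nonneg.2 (key z)) (Finset.mem_univ b)
  rw [Finset.sum_sub_distrib] at hsum
  unfold Dsum
  omega

lemma geodesic_weight (hT : T.IsTree) {w' : V} :
    ∀ {b : V} (p : T.Walk b w') {a : V} (h : T.Adj a b),
      p.length + 1 = T.dist a w' →
      (weight T b : ℤ) + p.length * (Dsum T a b + 2) ≤ weight T w' := by
  intro b p
  induction p with
  | nil => intro a h hd; simp
  | @cons b c w' h' q ih =>
    intro a h hd
    rw [SimpleGraph.Walk.length_cons] at hd
    have hac : a ≠ c := by
      rintro rfl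
      have := SimpleGraph.dist_le q
      omega
    have hgeo : q.length + 1 = T.dist b w' := by
      have hle : T.dist b w' ≤ q.length + 1 := by
        have := SimpleGraph.dist_le (SimpleGraph.Walk.cons h' q)
        rw [SimpleGraph.Walk.length_cons] at this
        omega
      have hge : T.dist a w' ≤ T.dist a b + T.dist b w' := hT.isConnected.dist_triangle
      rw [dist_one h] at hge
      omega
    have hIH := ih h' hgeo
    have hDc : (weight T c : ℤ) = weight T b + Dsum T b c := by
      have := weight_sub T b c; omega
    have hDs : Dsum T a b + 2 ≤ Dsum T b c := Dsum_step hT h h' hac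
    rw [SimpleGraph.Walk.length_cons]
    push_cast
    rw [hDc] at hIH
    have hq : (0:ℤ) ≤ (q.length : ℤ) := by positivity
    nlinarith [hIH, hDs, hq]

lemma centers_adj (hT : T.IsTree) {w w' : V} (hw : w ∈ weightCenters T)
    (hw' : w' ∈ weightCenters T) (hne : w ≠ w') : T.Adj w w' := by
  by_contra hadj
  have hd1 : 1 ≤ T.dist w w' := hT.isConnected.pos_dist_of_ne hne
  have hd2 : T.dist w w' ≠ 1 := fun h => hadj (SimpleGraph.dist_eq_one_iff_adj.1 h)
  obtain ⟨p, hpl⟩ := hT.isConnected.exists_walk_length_eq_dist w w'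
  cases p with
  | nil => simp at hpl; simp at hd1
  | @cons _ b _ h q =>
    rw [SimpleGraph.Walk.length_cons] at hpl
    have hgeo : q.length + 1 = T.dist w w' := hpl
    have := geodesic_weight hT q h hgeo
    have h1 : weight T w ≤ weight T b := hw b
    have h2 : weight T w' ≤ weight T b := hw' b
    have h3 : (0:ℤ) ≤ Dsum T w b := by have := weight_sub T w b; omega
    have hql : 1 ≤ q.length := by omega
    have hq : (1:ℤ) ≤ (q.length : ℤ) := by exact_mod_cast hql
    nlinarith [this, h3, hq]

end Weight



section Centers
variable [Fintype V] {T : SimpleGraph V}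

lemma centers_nonempty (hT : T.IsTree) : (weightCenters T).Nonempty := by
  have : Nonempty V := hT.isConnected.nonempty
  obtain ⟨c, -, hc⟩ := Finset.exists_min_image Finset.univ (weight T) ⟨Classical.arbitrary V, Finset.mem_univ _⟩
  exact ⟨c, fun u => hc u (Finset.mem_univ u)⟩

lemma no_three_centers (hT : T.IsTree) {w1 w2 w3 : V}
    (h1 : w1 ∈ weightCenters T) (h2 : w2 ∈ weightCenters T) (h3 : w3 ∈ weightCenters T)
    (h12 : w1 ≠ w2) (h13 : w1 ≠ w3) (h23 : w2 ≠ w3) : False := by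
  have a12 := centers_adj hT h1 h2 h12
  have a13 := centers_adj hT h1 h3 h13
  have a23 := centers_adj hT h2 h3 h23
  have p1 : (SimpleGraph.Walk.cons a12 SimpleGraph.Walk.nil : T.Walk w1 w2).IsPath := by
    simp [SimpleGraph.Walk.cons_isPath_iff, a12.ne]
  have p2 : (SimpleGraph.Walk.cons a13 (SimpleGraph.Walk.cons a23.symm SimpleGraph.Walk.nil) :
      T.Walk w1 w2).IsPath := by
    rw [SimpleGraph.Walk.cons_isPath_iff, SimpleGraph.Walk.cons_isPath_iff]
    refine ⟨⟨SimpleGraph.Walk.IsPath.nil, by simp [a23.ne']⟩, ?_⟩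
    simp [h13, h12]
  obtain ⟨P, -, hPu⟩ := hT.existsUnique_path w1 w2
  have := (hPu _ p1).trans (hPu _ p2).symm
  have hl := congrArg SimpleGraph.Walk.length this
  simp at hl

lemma centers_structure (hT : T.IsTree) :
    (∃ w, weightCenters T = {w}) ∨
    (∃ w w', w ≠ w' ∧ T.Adj w w' ∧ weightCenters T = {w, w'}) := by
  obtain ⟨w, hw⟩ := centers_nonempty hT
  by_cases hall : ∀ c ∈ weightCenters T, c = w
  · left
    exact ⟨w, Set.eq_singleton_iff_unique_mem.2 ⟨hw, hall⟩⟩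
  · right
    push_neg at hall
    obtain ⟨w', hw', hne⟩ := hall
    refine ⟨w, w', hne.symm, centers_adj hT hw hw' hne.symm, ?_⟩
    ext c
    constructor
    · intro hc
      by_contra hcc
      simp only [Set.mem_insert_iff, Set.mem_singleton_iff] at hcc
      push_neg at hcc
      exact no_three_centers hT hw hw' hc hne.symm hcc.1.symm hcc.2.symm
    · rintro (rfl | rfl) <;> simpa [Set.mem_singleton_iff] using (by first | exact hw | exact hw')

lemma level_le (hw : w ∈ weightCenters T) (x : V) : level T x ≤ T.dist x w :=
  Nat.sInf_le ⟨w, hw, rfl⟩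

lemma exists_level (hT : T.IsTree) (x : V) :
    ∃ w ∈ weightCenters T, T.dist x w = level T x := by
  obtain ⟨w, hw⟩ := centers_nonempty hT
  have : level T x ∈ {d : ℕ | ∃ w ∈ weightCenters T, T.dist x w = d} :=
    Nat.sInf_mem ⟨T.dist x w, w, hw, rfl⟩
  exact this

lemma eps_le_one (T : SimpleGraph V) : eps T ≤ 1 := by
  unfold eps; split <;> omega

/-- Key upper bound: `d(x,y) ≤ L(x) + L(y) + 1 - ε`. -/
lemma dist_le_level (hT : T.IsTree) (x y : V) :
    (T.dist x y : ℤ) ≤ level T x + level T y + 1 - eps T := by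
  have heps := eps_le_one T
  rcases centers_structure hT with ⟨w, hset⟩ | ⟨w, w', hne, hadj, hset⟩
  · have heps1 : eps T = 1 := by unfold eps; rw [hset, Set.ncard_singleton]; simp
    have hw : w ∈ weightCenters T := by rw [hset]; rfl
    have hx : level T x = T.dist x w := by
      obtain ⟨w2, hw2, hd⟩ := exists_level hT x
      rw [hset, Set.mem_singleton_iff] at hw2
      subst hw2
      exact hd.symm
    have hy : level T y = T.dist y w := by
      obtain ⟨w2, hw2, hd⟩ := exists_level hT y
      rw [hset, Set.mem_singleton_iff] at hw2
      subst hw2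
      exact hd.symm
    have htri : T.dist x y ≤ T.dist x w + T.dist w y := hT.isConnected.dist_triangle
    have hcomm : T.dist w y = T.dist y w := SimpleGraph.dist_comm
    rw [hx, hy, heps1]
    push_cast
    omega
  · have heps0 : eps T = 0 := by unfold eps; rw [hset, Set.ncard_pair hne]; simp
    obtain ⟨wx, hwx, hdx⟩ := exists_level hT x
    obtain ⟨wy, hwy, hdy⟩ := exists_level hT y
    have hwxy : T.dist wx wy ≤ 1 := by
      by_cases h : wx = wy
      · simp [h, SimpleGraph.dist_self]
      · exact le_of_eq (dist_one (centers_adj hT hwx hwy h))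
    have t1 : T.dist x y ≤ T.dist x wx + T.dist wx y := hT.isConnected.dist_triangle
    have t2 : T.dist wx y ≤ T.dist wx wy + T.dist wy y := hT.isConnected.dist_triangle
    have hcomm : T.dist wy y = T.dist y wy := SimpleGraph.dist_comm
    rw [← hdx, ← hdy, heps0]
    push_cast
    omega

end Centers

section Opp
variable [Fintype V] {T : SimpleGraph V} {x y : V}

lemma opposite_dist (hT : T.IsTree) (h : OppositeBranches T x y) :
    level T x + level T y + 1 ≤ T.dist x y := by
  classical
  obtain ⟨w, w', hne, hset, hnr⟩ := h
  have hwc : w ∈ weightCenters T := by rw [hset]; exact Set.mem_insert _ _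
  have hwc' : w' ∈ weightCenters T := by rw [hset]; exact Set.mem_insert_iff.2 (Or.inr rfl)
  obtain ⟨p, hpp, hpl⟩ := (hT.isConnected x y).exists_path_of_dist
  have hedge : s(w, w') ∈ p.edges := by
    by_contra hmem
    exact hnr ⟨p.toDeleteEdges {s(w, w')} (fun e he => by
      simp only [Set.mem_singleton_iff]; rintro rfl; exact hmem he)⟩
  have hww : T.dist w w' = 1 := dist_one (p.adj_of_mem_edges hedge)
  have hwsup : w ∈ p.support := p.fst_mem_support_of_mem_edges hedge
  have hsplit : (p.takeUntil w hwsup).append (p.dropUntil w hwsup) = p := p.take_spec hwsup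
  have hlen : (p.takeUntil w hwsup).length + (p.dropUntil w hwsup).length = p.length := by
    have := congrArg SimpleGraph.Walk.length hsplit
    rwa [SimpleGraph.Walk.length_append] at this
  have hlx : level T x ≤ T.dist x w := level_le hwc x
  have hly : level T y ≤ T.dist y w' := level_le hwc' y
  have hly2 : level T y ≤ T.dist y w := level_le hwc y
  have hlx2 : level T x ≤ T.dist x w' := level_le hwc' x
  have hedge2 : s(w, w') ∈ (p.takeUntil w hwsup).edges ∨
      s(w, w') ∈ (p.dropUntil w hwsup).edges := by
    have hE := congrArg SimpleGraph.Walk.edges hsplit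
    rw [SimpleGraph.Walk.edges_append] at hE
    rw [← hE, List.mem_append] at hedge
    exact hedge
  rcases hedge2 with he | he
  · have hw'sup : w' ∈ (p.takeUntil w hwsup).support :=
      SimpleGraph.Walk.snd_mem_support_of_mem_edges _ he
    have h1 : T.dist x w' + T.dist w' w ≤ (p.takeUntil w hwsup).length :=
      dist_split _ hw'sup
    have h2 : T.dist w y ≤ (p.dropUntil w hwsup).length := SimpleGraph.dist_le _
    have hc1 : T.dist w' w = 1 := by rw [SimpleGraph.dist_comm]; exact hww
    have hc2 : T.dist w y = T.dist y w := SimpleGraph.dist_comm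
    omega
  · have hw'sup : w' ∈ (p.dropUntil w hwsup).support :=
      SimpleGraph.Walk.snd_mem_support_of_mem_edges _ he
    have h1 : T.dist w w' + T.dist w' y ≤ (p.dropUntil w hwsup).length :=
      dist_split _ hw'sup
    have h2 : T.dist x w ≤ (p.takeUntil w hwsup).length := SimpleGraph.dist_le _
    have hc2 : T.dist w' y = T.dist y w' := SimpleGraph.dist_comm
    omega

lemma different_dist (hT : T.IsTree) (h : DifferentBranches T x y) :
    level T x + level T y ≤ T.dist x y := by
  obtain ⟨w, hw, hd⟩ := h
  have h1 : level T x ≤ T.dist x w := level_le hw x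
  have h2 : level T y ≤ T.dist y w := level_le hw y
  have hc : T.dist w y = T.dist y w := SimpleGraph.dist_comm
  omega

end Opp

section Pet

lemma genPetersen_connected (m k : ℕ) [NeZero m] (hm : 3 ≤ m) :
    (genPetersen m k).Connected := by
  have h10 : (1 : ZMod m) ≠ 0 := by
    haveI : Fact (1 < m) := ⟨by omega⟩
    exact one_ne_zero
  have hadj1 : ∀ i : ZMod m, (genPetersen m k).Adj (false, i) (false, i + 1) := by
    intro i
    refine ⟨?_, Or.inl (Or.inl ⟨rfl, rfl, rfl⟩)⟩
    simp only [ne_eq, Prod.mk.injEq, true_and]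
    intro hii
    exact h10 (by linear_combination -hii)
  have hadj2 : ∀ i : ZMod m, (genPetersen m k).Adj (false, i) (true, i) := by
    intro i
    exact ⟨by simp, Or.inl (Or.inr (Or.inl ⟨rfl, rfl, rfl⟩))⟩
  have houter : ∀ j : ℕ, (genPetersen m k).Reachable (false, (j : ZMod m)) (false, 0) := by
    intro j
    induction j with
    | zero =>
      simp only [Nat.cast_zero]
      exact SimpleGraph.Reachable.refl _
    | succ j ih =>
      refine SimpleGraph.Reachable.trans ?_ ih
      have : ((j + 1 : ℕ) : ZMod m) = (j : ZMod m) + 1 := by push_cast; ring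
      rw [this]
      exact (hadj1 (j : ZMod m)).symm.reachable
  have hall : ∀ v : Bool × ZMod m, (genPetersen m k).Reachable v (false, 0) := by
    rintro ⟨b, i⟩
    have houteri : (genPetersen m k).Reachable (false, i) (false, 0) := by
      have : ((i.val : ℕ) : ZMod m) = i := ZMod.natCast_zmod_val i
      rw [← this]
      exact houter i.val
    cases b
    · exact houteri
    · exact ((hadj2 i).symm.reachable).trans houteri
  constructor
  intro u v
  exact (hall u).trans (hall v).symm

end Pet

section Box
open SimpleGraph
variable {α β : Type*} {G : SimpleGraph α} {H : SimpleGraph β}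

lemma boxProd_walk_ge (hG : G.Connected) (hH : H.Connected) :
    ∀ {u v : α × β} (p : (G □ H).Walk u v), G.dist u.1 v.1 + H.dist u.2 v.2 ≤ p.length := by
  intro u v p
  induction p with
  | nil => simp
  | @cons u w v h q ih =>
    rw [SimpleGraph.Walk.length_cons]
    rcases h with ⟨h1, h2⟩ | ⟨h1, h2⟩
    · have t1 : G.dist u.1 v.1 ≤ G.dist u.1 w.1 + G.dist w.1 v.1 := hG.dist_triangle
      have t2 : G.dist u.1 w.1 = 1 := dist_one h1
      rw [h2]
      omega
    · have t1 : H.dist u.2 v.2 ≤ H.dist u.2 w.2 + H.dist w.2 v.2 := hH.dist_triangle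
      have t2 : H.dist u.2 w.2 = 1 := dist_one h1
      rw [h2]
      omega

lemma boxProd_dist_ge (hG : G.Connected) (hH : H.Connected) (u v : α × β) :
    G.dist u.1 v.1 + H.dist u.2 v.2 ≤ (G □ H).dist u v := by
  obtain ⟨p, hp⟩ := ((hG.boxProd hH).exists_walk_length_eq_dist u v)
  rw [← hp]
  exact boxProd_walk_ge hG hH p

lemma boxProd_dist_le (hG : G.Connected) (hH : H.Connected) (a b : α) (x y : β) :
    (G □ H).dist (a, x) (b, y) ≤ G.dist a b + H.dist x y := by
  obtain ⟨p, hp⟩ := hG.exists_walk_length_eq_dist a b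
  obtain ⟨q, hq⟩ := hH.exists_walk_length_eq_dist x y
  have := SimpleGraph.dist_le ((p.boxProdLeft (H := H) x).append (q.boxProdRight (G := G) b))
  rw [SimpleGraph.Walk.length_append] at this
  have h1 : (p.boxProdLeft (H := H) x).length = p.length := by
    simp [SimpleGraph.Walk.boxProdLeft]
    exact SimpleGraph.Walk.length_map _ _
  have h2 : (q.boxProdRight (G := G) b).length = q.length := by
    simp [SimpleGraph.Walk.boxProdRight]
    exact SimpleGraph.Walk.length_map _ _
  omega

lemma dist_le_graphDiam [Fintype α] (G : SimpleGraph α) (u v : α) :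
    G.dist u v ≤ graphDiam G :=
  Finset.le_sup (f := fun p : α × α => G.dist p.1 p.2) (Finset.mem_univ (u, v))

lemma exists_graphDiam_pair [Fintype α] [Nonempty α] (G : SimpleGraph α) :
    ∃ u v : α, G.dist u v = graphDiam G := by
  obtain ⟨p, -, hp⟩ := Finset.exists_mem_eq_sup (Finset.univ : Finset (α × α))
    Finset.univ_nonempty (fun p : α × α => G.dist p.1 p.2)
  exact ⟨p.1, p.2, hp.symm⟩

lemma graphDiam_boxProd_ge [Fintype α] [Fintype β] (hG : G.Connected) (hH : H.Connected) :
    graphDiam G + graphDiam H ≤ graphDiam (G □ H) := by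
  have : Nonempty α := hG.nonempty
  have : Nonempty β := hH.nonempty
  obtain ⟨a, b, hab⟩ := exists_graphDiam_pair G
  obtain ⟨x, y, hxy⟩ := exists_graphDiam_pair H
  calc graphDiam G + graphDiam H = G.dist a b + H.dist x y := by rw [hab, hxy]
  _ ≤ (G □ H).dist (a, x) (b, y) := boxProd_dist_ge hG hH (a, x) (b, y)
  _ ≤ graphDiam (G □ H) := dist_le_graphDiam _ _ _

end Box

section Sums
variable {X : Type*} [Fintype X]

lemma sum_range_of_bij {M : Type*} [AddCommMonoid M] {N : ℕ} (o : ℕ → X)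
    (ho : ∀ v : X, ∃! t : ℕ, t < N ∧ o t = v) (F : X → M) :
    ∑ t ∈ Finset.range N, F (o t) = ∑ v : X, F v := by
  refine Finset.sum_bij (fun t _ => o t) (fun t _ => Finset.mem_univ _) ?_ ?_ (fun t _ => rfl)
  · intro t1 h1 t2 h2 heq
    obtain ⟨t0, -, hu⟩ := ho (o t1)
    rw [hu t1 ⟨Finset.mem_range.1 h1, rfl⟩, hu t2 ⟨Finset.mem_range.1 h2, heq.symm⟩]
  · intro v _
    obtain ⟨t, ⟨htN, hot⟩, -⟩ := ho v
    exact ⟨t, Finset.mem_range.2 htN, hot⟩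

lemma sum_level_eq {A Vt : Type*} [Fintype A] [Fintype Vt] (T : SimpleGraph Vt) :
    ∑ v : A × Vt, (level T v.2 : ℤ) = Fintype.card A * totalLevel T := by
  have : (totalLevel T : ℤ) = ∑ y : Vt, (level T y : ℤ) := by
    unfold totalLevel; push_cast; rfl
  rw [this, Fintype.sum_prod_type]
  simp [Finset.sum_const, Finset.card_univ, nsmul_eq_mul]

end Sums

section LowerBound
open SimpleGraph
variable {A Vt : Type*} [Fintype A] [Fintype Vt]

lemma lower_bound (G : SimpleGraph A) (T : SimpleGraph Vt) (hG : G.Connected)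
    (hT : T.IsTree) (g : A × Vt → ℕ) (hg : IsRadioLabeling (G.boxProd T) g) :
    ((Fintype.card (A × Vt) : ℤ) - 1) * ((graphDiam T : ℤ) + eps T) -
      2 * Fintype.card A * totalLevel T ≤ (radioSpan g : ℤ) := by
  classical
  have hTc : T.Connected := hT.isConnected
  have hA : Nonempty A := hG.nonempty
  have hVt : Nonempty Vt := hTc.nonempty
  set N := Fintype.card (A × Vt) with hNdef
  have hN1 : 1 ≤ N := Fintype.card_pos
  -- g is injective
  have hginj : Function.Injective g := by
    intro u v huv
    by_contra hne
    have h1 := hg u v hne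
    have h2 : (G.boxProd T).dist u v ≤ graphDiam (G.boxProd T) := dist_le_graphDiam _ _ _
    rw [huv] at h1
    simp only [sub_self, abs_zero] at h1
    have : ((G.boxProd T).dist u v : ℤ) ≤ (graphDiam (G.boxProd T) : ℤ) := by exact_mod_cast h2
    omega
  letI : LinearOrder (A × Vt) := LinearOrder.lift' g hginj
  have hcard : (Finset.univ : Finset (A × Vt)).card = N := by
    rw [Finset.card_univ]
  let e := Finset.univ.orderIsoOfFin hcard
  set E : ℕ → A × Vt := fun t => if h : t < N then (e ⟨t, h⟩ : A × Vt) else (e ⟨0, hN1⟩ : A × Vt)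
    with hEdef
  have hEeq : ∀ t (h : t < N), E t = (e ⟨t, h⟩ : A × Vt) := by
    intro t h; simp only [hEdef, dif_pos h]
  have hElt : ∀ s t, s < t → t < N → g (E s) < g (E t) := by
    intro s t hst htN
    have hsN : s < N := lt_trans hst htN
    rw [hEeq s hsN, hEeq t htN]
    have h1 : (⟨s, hsN⟩ : Fin N) < ⟨t, htN⟩ := hst
    have h2 : e ⟨s, hsN⟩ < e ⟨t, htN⟩ := (OrderIso.lt_iff_lt e).2 h1
    have h3 : (e ⟨s, hsN⟩ : A × Vt) < (e ⟨t, htN⟩ : A × Vt) := Subtype.coe_lt_coe.2 h2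
    exact h3
  have hEbij : ∀ v : A × Vt, ∃! t : ℕ, t < N ∧ E t = v := by
    intro v
    obtain ⟨i, hi⟩ := e.surjective ⟨v, Finset.mem_univ v⟩
    refine ⟨i.val, ⟨i.isLt, by rw [hEeq i.val i.isLt]; simp [Fin.eta, hi]⟩, ?_⟩
    intro t ⟨htN, hEt⟩
    rw [hEeq t htN] at hEt
    have hco : ((e ⟨t, htN⟩ : { x // x ∈ Finset.univ }) : A × Vt) =
        ((e i : { x // x ∈ Finset.univ }) : A × Vt) := by rw [hEt, hi]
    have : (⟨t, htN⟩ : Fin N) = i := e.injective (Subtype.coe_injective hco)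
    exact congrArg Fin.val this
  -- key step bound
  have hstep : ∀ t, t + 1 < N →
      (graphDiam T : ℤ) + eps T - level T (E t).2 - level T (E (t + 1)).2 ≤
        (g (E (t + 1)) : ℤ) - g (E t) := by
    intro t ht
    have hlt := hElt t (t + 1) (Nat.lt_succ_self t) ht
    have hne : E t ≠ E (t + 1) := fun h => by rw [h] at hlt; omega
    have h1 := hg (E t) (E (t + 1)) hne
    have hle' : (g (E t) : ℤ) ≤ g (E (t + 1)) := by exact_mod_cast hlt.le
    have habs : |(g (E t) : ℤ) - g (E (t + 1))| = (g (E (t + 1)) : ℤ) - g (E t) := by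
      rw [abs_sub_comm]
      exact abs_of_nonneg (by linarith)
    rw [habs] at h1
    have hdiam : (graphDiam G : ℤ) + graphDiam T ≤ graphDiam (G.boxProd T) := by
      exact_mod_cast graphDiam_boxProd_ge hG hTc
    have hdist : ((G.boxProd T).dist (E t) (E (t + 1)) : ℤ) ≤
        (graphDiam G : ℤ) + (level T (E t).2 + level T (E (t + 1)).2 + 1 - eps T) := by
      have hd1 : (G.boxProd T).dist (E t) (E (t + 1)) ≤
          G.dist (E t).1 (E (t + 1)).1 + T.dist (E t).2 (E (t + 1)).2 := by
        have := boxProd_dist_le hG hTc (E t).1 (E (t + 1)).1 (E t).2 (E (t + 1)).2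
        simpa using this
      have hd2 : G.dist (E t).1 (E (t + 1)).1 ≤ graphDiam G := dist_le_graphDiam _ _ _
      have hd3 : (T.dist (E t).2 (E (t + 1)).2 : ℤ) ≤
          level T (E t).2 + level T (E (t + 1)).2 + 1 - eps T := dist_le_level hT _ _
      have hc1 : ((G.boxProd T).dist (E t) (E (t + 1)) : ℤ) ≤
          (G.dist (E t).1 (E (t + 1)).1 : ℤ) + T.dist (E t).2 (E (t + 1)).2 := by
        exact_mod_cast hd1
      have hc2 : (G.dist (E t).1 (E (t + 1)).1 : ℤ) ≤ (graphDiam G : ℤ) := by exact_mod_cast hd2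
      linarith
    linarith
  -- telescoping
  have htel : ∑ t ∈ Finset.range (N - 1), ((g (E (t + 1)) : ℤ) - g (E t)) =
      (g (E (N - 1)) : ℤ) - g (E 0) := Finset.sum_range_sub (fun t => (g (E t) : ℤ)) (N - 1)
  have hsum1 : ∑ t ∈ Finset.range (N - 1),
      ((graphDiam T : ℤ) + eps T - level T (E t).2 - level T (E (t + 1)).2) ≤
      (g (E (N - 1)) : ℤ) - g (E 0) := by
    rw [← htel]
    exact Finset.sum_le_sum (fun t ht => hstep t (by have := Finset.mem_range.1 ht; omega))
  -- evaluate the sum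
  have hLsum : ∑ t ∈ Finset.range N, (level T (E t).2 : ℤ) =
      (Fintype.card A : ℤ) * totalLevel T := by
    rw [sum_range_of_bij E hEbij (fun v => (level T v.2 : ℤ))]
    exact sum_level_eq T
  have hNN : N - 1 + 1 = N := Nat.succ_pred_eq_of_pos hN1
  have hsplit1 : ∑ t ∈ Finset.range (N - 1), (level T (E t).2 : ℤ) + (level T (E (N-1)).2 : ℤ) =
      ∑ t ∈ Finset.range N, (level T (E t).2 : ℤ) := by
    have h := Finset.sum_range_succ (fun t => (level T (E t).2 : ℤ)) (N - 1)
    rw [hNN] at h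
    simpa using h.symm
  have hsplit2 : ∑ t ∈ Finset.range (N - 1), (level T (E (t + 1)).2 : ℤ) + (level T (E 0).2 : ℤ) =
      ∑ t ∈ Finset.range N, (level T (E t).2 : ℤ) := by
    have h := Finset.sum_range_succ' (fun t => (level T (E t).2 : ℤ)) (N - 1)
    rw [hNN] at h
    simpa using h.symm
  have hconst : ∑ t ∈ Finset.range (N - 1),
      ((graphDiam T : ℤ) + eps T - level T (E t).2 - level T (E (t + 1)).2) =
      ((N : ℤ) - 1) * ((graphDiam T : ℤ) + eps T)
        - ∑ t ∈ Finset.range (N - 1), (level T (E t).2 : ℤ)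
        - ∑ t ∈ Finset.range (N - 1), (level T (E (t + 1)).2 : ℤ) := by
    rw [Finset.sum_sub_distrib, Finset.sum_sub_distrib, Finset.sum_const, Finset.card_range,
      nsmul_eq_mul, Nat.cast_sub hN1]
    push_cast
    ring
  -- span bound
  have hspan : (g (E (N - 1)) : ℤ) - g (E 0) ≤ (radioSpan g : ℤ) := by
    have hle : g (E 0) ≤ g (E (N - 1)) := by
      rcases Nat.lt_or_ge 1 N with h | h
      · exact (hElt 0 (N - 1) (by omega) (by omega)).le
      · rw [show N - 1 = 0 by omega]
    have hmem : g (E (N - 1)) - g (E 0) ≤ radioSpan g :=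
      Finset.le_sup (f := fun p : (A × Vt) × (A × Vt) => g p.1 - g p.2)
        (Finset.mem_univ (E (N - 1), E 0))
    calc (g (E (N - 1)) : ℤ) - g (E 0) = ((g (E (N - 1)) - g (E 0) : ℕ) : ℤ) := by
          rw [Nat.cast_sub hle]
    _ ≤ (radioSpan g : ℤ) := by exact_mod_cast hmem
  have hL0 : (0 : ℤ) ≤ level T (E 0).2 := by positivity
  have hLN : (0 : ℤ) ≤ level T (E (N - 1)).2 := by positivity
  rw [hconst] at hsum1
  have h2 : (2 : ℤ) * Fintype.card A * totalLevel T =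
      (Fintype.card A : ℤ) * totalLevel T + (Fintype.card A : ℤ) * totalLevel T := by ring
  linarith [hsum1, hsplit1, hsplit2, hLsum, hL0, hLN, hspan, h2]

end LowerBound

end Aux

/-- Sufficiency in Theorem 3.1: if there is an ordering `z_0, …, z_{2mn-1}` of the vertices
of `P_{m,k} □ T`, `z_t = (x_{i_t}, y_{j_t})`, satisfying (a) consecutive Petersen
coordinates at distance `d_p`; (b) `L_T(y_{j_0}) + L_T(y_{j_{2mn-1}}) = 0`; (c) consecutive
tree coordinates in different branches (one weight center) resp. opposite branches (two
weight centers); and (d) the mapping `f` defined by `f(z_0) = 0` and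
`f(z_{t+1}) = f(z_t) + d_t + ε - L_T(y_{j_t}) - L_T(y_{j_{t+1}})` is a radio labeling,
then `rn(P_{m,k} □ T) = (2mn - 1)(d_t + ε) - 4m·L(T)`. -/
theorem radioNumber_eq_lower_bound_of_ordering
    {Vt : Type*} [Fintype Vt] (m k n : ℕ) [NeZero m] (hm : 3 ≤ m) (hk : 1 ≤ k)
    (T : SimpleGraph Vt) (hT : T.IsTree) (hn : Fintype.card Vt = n)
    (o : ℕ → (Bool × ZMod m) × Vt)
    (ho : ∀ v : (Bool × ZMod m) × Vt, ∃! t : ℕ, t < 2 * m * n ∧ o t = v)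
    (ha : ∀ t : ℕ, t + 1 < 2 * m * n →
      (genPetersen m k).dist (o t).1 (o (t + 1)).1 = graphDiam (genPetersen m k))
    (hb : level T (o 0).2 + level T (o (2 * m * n - 1)).2 = 0)
    (hc : ∀ t : ℕ, t + 1 < 2 * m * n →
      ((weightCenters T).ncard = 1 → DifferentBranches T (o t).2 (o (t + 1)).2) ∧
      ((weightCenters T).ncard = 2 → OppositeBranches T (o t).2 (o (t + 1)).2))
    (f : (Bool × ZMod m) × Vt → ℕ) (hf0 : f (o 0) = 0)
    (hfrec : ∀ t : ℕ, t + 1 < 2 * m * n →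
      (f (o (t + 1)) : ℤ) = (f (o t) : ℤ) + graphDiam T + eps T -
        level T (o t).2 - level T (o (t + 1)).2)
    (hd : IsRadioLabeling ((genPetersen m k).boxProd T) f) :
    (radioNumber ((genPetersen m k).boxProd T) : ℤ) =
      ((2 * m * n : ℤ) - 1) * ((graphDiam T : ℤ) + eps T) - 4 * m * totalLevel T := by
  classical
  have hTc : T.Connected := hT.isConnected
  have hVt : Nonempty Vt := hTc.nonempty
  have hPc : (genPetersen m k).Connected := genPetersen_connected m k hm
  have hn1 : 1 ≤ n := by rw [← hn]; exact Fintype.card_pos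
  set N := 2 * m * n with hNdef
  have hcA : Fintype.card (Bool × ZMod m) = 2 * m := by
    rw [Fintype.card_prod, Fintype.card_bool, ZMod.card]
  have hcard : Fintype.card ((Bool × ZMod m) × Vt) = N := by
    rw [Fintype.card_prod, hcA, hn]
  have hN6 : 6 ≤ N := by
    calc 6 = 2 * 3 * 1 := rfl
    _ ≤ 2 * m * n := Nat.mul_le_mul (Nat.mul_le_mul (le_refl 2) hm) hn1
  -- the jumps of f are nonnegative
  have hstep : ∀ t, t + 1 < N → (f (o t) : ℤ) ≤ (f (o (t + 1)) : ℤ) := by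
    intro t ht
    rw [hfrec t ht]
    have heps : (0 : ℤ) ≤ eps T := by positivity
    rcases centers_structure hT with ⟨w, hset⟩ | ⟨w, w', hne, hadj, hset⟩
    · have hnc : (weightCenters T).ncard = 1 := by rw [hset, Set.ncard_singleton]
      have h1 := different_dist hT ((hc t ht).1 hnc)
      have h2 : T.dist (o t).2 (o (t + 1)).2 ≤ graphDiam T := dist_le_graphDiam _ _ _
      have h1' : (level T (o t).2 : ℤ) + level T (o (t + 1)).2 ≤
          T.dist (o t).2 (o (t + 1)).2 := by exact_mod_cast h1
      have h2' : (T.dist (o t).2 (o (t + 1)).2 : ℤ) ≤ graphDiam T := by exact_mod_cast h2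
      linarith
    · have hnc : (weightCenters T).ncard = 2 := by rw [hset, Set.ncard_pair hne]
      have h1 := opposite_dist hT ((hc t ht).2 hnc)
      have h2 : T.dist (o t).2 (o (t + 1)).2 ≤ graphDiam T := dist_le_graphDiam _ _ _
      have h1' : (level T (o t).2 : ℤ) + level T (o (t + 1)).2 + 1 ≤
          T.dist (o t).2 (o (t + 1)).2 := by exact_mod_cast h1
      have h2' : (T.dist (o t).2 (o (t + 1)).2 : ℤ) ≤ graphDiam T := by exact_mod_cast h2
      linarith
  have hmono : ∀ s t, s ≤ t → t < N → f (o s) ≤ f (o t) := by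
    intro s t hst htN
    induction t with
    | zero =>
      have : s = 0 := by omega
      rw [this]
    | succ t ih =>
      rcases Nat.lt_or_ge s (t + 1) with h | h
      · have h1 : f (o s) ≤ f (o t) := ih (by omega) (by omega)
        have h2 : (f (o t) : ℤ) ≤ f (o (t + 1)) := hstep t htN
        exact le_trans h1 (by exact_mod_cast h2)
      · have : s = t + 1 := by omega
        rw [this]
  -- the span of f
  have hospan : radioSpan f = f (o (N - 1)) := by
    apply le_antisymm
    · apply Finset.sup_le
      intro p _
      obtain ⟨t1, ⟨ht1, hot1⟩, -⟩ := ho p.1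
      calc f p.1 - f p.2 ≤ f p.1 := Nat.sub_le _ _
      _ = f (o t1) := by rw [hot1]
      _ ≤ f (o (N - 1)) := hmono t1 (N - 1) (by omega) (by omega)
    · have hle := Finset.le_sup
        (f := fun p : ((Bool × ZMod m) × Vt) × ((Bool × ZMod m) × Vt) => f p.1 - f p.2)
        (Finset.mem_univ (o (N - 1), o 0))
      simp [hf0] at hle
      exact hle
  -- telescoping the value of f
  have hNN : N - 1 + 1 = N := by omega
  have htel : ∑ t ∈ Finset.range (N - 1), ((f (o (t + 1)) : ℤ) - f (o t)) =
      (f (o (N - 1)) : ℤ) - f (o 0) := Finset.sum_range_sub (fun t => (f (o t) : ℤ)) (N - 1)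
  have hterm : ∀ t ∈ Finset.range (N - 1), ((f (o (t + 1)) : ℤ) - f (o t)) =
      (graphDiam T : ℤ) + eps T - level T (o t).2 - level T (o (t + 1)).2 := by
    intro t ht
    have h := hfrec t (by have := Finset.mem_range.1 ht; omega)
    omega
  have hb0 : level T (o 0).2 = 0 := by omega
  have hbN : level T (o (N - 1)).2 = 0 := by omega
  have hLsum : ∑ t ∈ Finset.range N, (level T (o t).2 : ℤ) =
      ((2 * m : ℕ) : ℤ) * totalLevel T := by
    rw [sum_range_of_bij o ho (fun v => (level T v.2 : ℤ)), sum_level_eq T, hcA]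
  have hsplit1 : ∑ t ∈ Finset.range (N - 1), (level T (o t).2 : ℤ)
      + (level T (o (N - 1)).2 : ℤ) = ∑ t ∈ Finset.range N, (level T (o t).2 : ℤ) := by
    have h := Finset.sum_range_succ (fun t => (level T (o t).2 : ℤ)) (N - 1)
    rw [hNN] at h
    simpa using h.symm
  have hsplit2 : ∑ t ∈ Finset.range (N - 1), (level T (o (t + 1)).2 : ℤ)
      + (level T (o 0).2 : ℤ) = ∑ t ∈ Finset.range N, (level T (o t).2 : ℤ) := by
    have h := Finset.sum_range_succ' (fun t => (level T (o t).2 : ℤ)) (N - 1)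
    rw [hNN] at h
    simpa using h.symm
  have hN1 : 1 ≤ N := by omega
  have hconst : ∑ t ∈ Finset.range (N - 1),
      ((graphDiam T : ℤ) + eps T - level T (o t).2 - level T (o (t + 1)).2) =
      ((N : ℤ) - 1) * ((graphDiam T : ℤ) + eps T)
        - ∑ t ∈ Finset.range (N - 1), (level T (o t).2 : ℤ)
        - ∑ t ∈ Finset.range (N - 1), (level T (o (t + 1)).2 : ℤ) := by
    rw [Finset.sum_sub_distrib, Finset.sum_sub_distrib, Finset.sum_const, Finset.card_range,
      nsmul_eq_mul, Nat.cast_sub hN1]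
    push_cast
    ring
  have hval : (f (o (N - 1)) : ℤ) =
      ((N : ℤ) - 1) * ((graphDiam T : ℤ) + eps T) - 4 * m * totalLevel T := by
    have h1 : (f (o (N - 1)) : ℤ) - f (o 0) = ∑ t ∈ Finset.range (N - 1),
        ((graphDiam T : ℤ) + eps T - level T (o t).2 - level T (o (t + 1)).2) := by
      rw [← htel]
      exact Finset.sum_congr rfl hterm
    rw [hf0] at h1
    rw [hconst] at h1
    have hz0 : (level T (o 0).2 : ℤ) = 0 := by exact_mod_cast hb0
    have hzN : (level T (o (N - 1)).2 : ℤ) = 0 := by exact_mod_cast hbN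
    have hcast : ((2 * m : ℕ) : ℤ) = 2 * m := by push_cast; ring
    rw [hcast] at hLsum
    push_cast at h1 ⊢
    linarith [h1, hsplit1, hsplit2, hLsum, hz0, hzN]
  -- upper bound
  have hup : radioNumber ((genPetersen m k).boxProd T) ≤ radioSpan f :=
    Nat.sInf_le ⟨f, hd, rfl⟩
  -- lower bound
  have hnem : {s : ℕ | ∃ g : (Bool × ZMod m) × Vt → ℕ,
      IsRadioLabeling ((genPetersen m k).boxProd T) g ∧ radioSpan g = s}.Nonempty :=
    ⟨radioSpan f, f, hd, rfl⟩
  obtain ⟨g, hgr, hgs⟩ := Nat.sInf_mem hnem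
  have hlow := lower_bound (genPetersen m k) T hPc hT g hgr
  rw [hgs] at hlow
  have hlow' : ((N : ℤ) - 1) * ((graphDiam T : ℤ) + eps T) - 4 * m * totalLevel T ≤
      (radioNumber ((genPetersen m k).boxProd T) : ℤ) := by
    have hc1 : ((Fintype.card ((Bool × ZMod m) × Vt) : ℤ)) = (N : ℤ) := by exact_mod_cast hcard
    have hc2 : ((Fintype.card (Bool × ZMod m) : ℤ)) = 2 * m := by
      rw [hcA]; push_cast; ring
    rw [hc1, hc2] at hlow
    calc ((N : ℤ) - 1) * ((graphDiam T : ℤ) + eps T) - 4 * m * totalLevel T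
        = ((N : ℤ) - 1) * ((graphDiam T : ℤ) + eps T) - 2 * (2 * m) * totalLevel T := by ring
    _ ≤ _ := hlow
  have hup' : (radioNumber ((genPetersen m k).boxProd T) : ℤ) ≤
      ((N : ℤ) - 1) * ((graphDiam T : ℤ) + eps T) - 4 * m * totalLevel T := by
    rw [← hval, ← hospan]
    exact_mod_cast hup
  have hNcast : ((N : ℕ) : ℤ) = 2 * m * n := by rw [hNdef]; push_cast; ring
  rw [← hNcast]
  linarith [hup', hlow']

end RadioPaper
end

section
/- Let P_{5,2} be the Petersen graph and K_{1,n} the star with n ≥ 3 leaves. Then rn(P_{5,2} □ K_{1,n}) = 10n + 27. -/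
/-!
Common definitions: radio labelings, weight centers, levels, branches,
generalized Petersen graphs, stars.
-/

open Finset

namespace RadioPaper

variable {V : Type*}

/-! ### Auxiliary development -/

open SimpleGraph

instance (m k : ℕ) : DecidableRel (genPetersen m k).Adj := fun a b =>
  decidable_of_iff _ (SimpleGraph.fromRel_adj _ a b).symm

instance (n : ℕ) : DecidableRel (starGraph n).Adj := fun a b =>
  decidable_of_iff _ (SimpleGraph.fromRel_adj _ a b).symm

/-- explicit Petersen distance -/
def DP (u v : Bool × ZMod 5) : ℕ :=
  if u = v then 0 else if (genPetersen 5 2).Adj u v then 1 else 2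

/-- explicit star distance -/
def DS {n : ℕ} (a b : Fin (n + 1)) : ℕ :=
  if a = b then 0 else if a = 0 ∨ b = 0 then 1 else 2

lemma petersen_two : ∀ u v : Bool × ZMod 5, u = v ∨ (genPetersen 5 2).Adj u v ∨
    ∃ w, (genPetersen 5 2).Adj u w ∧ (genPetersen 5 2).Adj w v := by decide

lemma petersen_dist_le (u v : Bool × ZMod 5) : (genPetersen 5 2).dist u v ≤ 2 := by
  rcases petersen_two u v with h | h | ⟨w, h1, h2⟩
  · subst h; simp [SimpleGraph.dist_self]
  · have := SimpleGraph.dist_le (Walk.cons h Walk.nil); simp at this; omega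
  · have := SimpleGraph.dist_le (Walk.cons h1 (Walk.cons h2 Walk.nil)); simpa using this

lemma petersen_reachable (u v : Bool × ZMod 5) : (genPetersen 5 2).Reachable u v := by
  rcases petersen_two u v with h | h | ⟨w, h1, h2⟩
  · subst h; exact Reachable.refl u
  · exact h.reachable
  · exact h1.reachable.trans h2.reachable

lemma petersen_connected : (genPetersen 5 2).Connected := by
  have : Nonempty (Bool × ZMod 5) := ⟨(false, 0)⟩
  exact ⟨petersen_reachable⟩

lemma petersen_dist (u v : Bool × ZMod 5) : (genPetersen 5 2).dist u v = DP u v := by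
  unfold DP
  split_ifs with h1 h2
  · subst h1; simp [SimpleGraph.dist_self]
  · exact SimpleGraph.dist_eq_one_iff_adj.mpr h2
  · have hle := petersen_dist_le u v
    have h0 : (genPetersen 5 2).dist u v ≠ 0 := by
      rw [SimpleGraph.dist_ne_zero_iff_ne_and_reachable]
      exact ⟨h1, petersen_reachable u v⟩
    have hne1 : (genPetersen 5 2).dist u v ≠ 1 := fun h =>
      h2 (SimpleGraph.dist_eq_one_iff_adj.mp h)
    omega

lemma star_adj {n : ℕ} (a b : Fin (n + 1)) :
    (starGraph n).Adj a b ↔ a ≠ b ∧ (a = 0 ∨ b = 0) := by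
  rw [starGraph, SimpleGraph.fromRel_adj]

lemma star_reachable {n : ℕ} (a b : Fin (n + 1)) : (starGraph n).Reachable a b := by
  by_cases hab : a = b
  · subst hab; exact Reachable.refl a
  by_cases ha : a = 0
  · exact (((star_adj a b).mpr ⟨hab, Or.inl ha⟩)).reachable
  by_cases hb : b = 0
  · exact (((star_adj a b).mpr ⟨hab, Or.inr hb⟩)).reachable
  · exact (((star_adj a 0).mpr ⟨ha, Or.inr rfl⟩)).reachable.trans
      (((star_adj (0 : Fin (n+1)) b).mpr ⟨fun h => hb h.symm, Or.inl rfl⟩)).reachable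

lemma star_connected (n : ℕ) : (starGraph n).Connected := by
  have : Nonempty (Fin (n+1)) := ⟨0⟩
  exact ⟨star_reachable⟩

lemma star_dist {n : ℕ} (a b : Fin (n + 1)) : (starGraph n).dist a b = DS a b := by
  unfold DS
  split_ifs with h1 h2
  · subst h1; simp [SimpleGraph.dist_self]
  · exact SimpleGraph.dist_eq_one_iff_adj.mpr ((star_adj a b).mpr ⟨h1, h2⟩)
  · push_neg at h2
    have hle : (starGraph n).dist a b ≤ 2 := by
      have := SimpleGraph.dist_le (Walk.cons ((star_adj a 0).mpr ⟨h2.1, Or.inr rfl⟩)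
        (Walk.cons ((star_adj (0 : Fin (n+1)) b).mpr ⟨fun h => h2.2 h.symm, Or.inl rfl⟩)
          Walk.nil))
      simpa using this
    have h0 : (starGraph n).dist a b ≠ 0 := by
      rw [SimpleGraph.dist_ne_zero_iff_ne_and_reachable]
      exact ⟨h1, star_reachable a b⟩
    have hne1 : (starGraph n).dist a b ≠ 1 := fun h => by
      have := (star_adj a b).mp (SimpleGraph.dist_eq_one_iff_adj.mp h)
      tauto
    omega

section BoxProdDist

variable {α β : Type*} {G : SimpleGraph α} {H : SimpleGraph β}

lemma dist_boxProd_le {x₁ y₁ : α} {x₂ y₂ : β}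
    (hG : G.Reachable x₁ y₁) (hH : H.Reachable x₂ y₂) :
    (G.boxProd H).dist (x₁, x₂) (y₁, y₂) ≤ G.dist x₁ y₁ + H.dist x₂ y₂ := by
  obtain ⟨w₁, hw₁⟩ := hG.exists_walk_length_eq_dist
  obtain ⟨w₂, hw₂⟩ := hH.exists_walk_length_eq_dist
  have := SimpleGraph.dist_le ((w₁.boxProdLeft H x₂).append (w₂.boxProdRight G y₁))
  have e1 : (w₁.boxProdLeft H x₂).length = w₁.length := Walk.length_map (p := w₁) ..
  have e2 : (w₂.boxProdRight G y₁).length = w₂.length := Walk.length_map (p := w₂) ..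
  rw [SimpleGraph.Walk.length_append, e1, e2, hw₁, hw₂] at this
  exact this

lemma le_walk_length_boxProd (hG : G.Connected) (hH : H.Connected) :
    ∀ {x y : α × β} (w : (G.boxProd H).Walk x y),
      G.dist x.1 y.1 + H.dist x.2 y.2 ≤ w.length := by
  intro x y w
  induction w with
  | nil => simp
  | @cons a b c h w ih =>
    rcases SimpleGraph.boxProd_adj.mp h with ⟨h1, h2⟩ | ⟨h1, h2⟩
    · have t1 : G.dist a.1 c.1 ≤ 1 + G.dist b.1 c.1 := by
        calc G.dist a.1 c.1 ≤ G.dist a.1 b.1 + G.dist b.1 c.1 := hG.dist_triangle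
        _ ≤ 1 + G.dist b.1 c.1 := by
            have : G.dist a.1 b.1 = 1 := (SimpleGraph.dist_eq_one_iff_adj).mpr h1
            omega
      have : H.dist a.2 c.2 = H.dist b.2 c.2 := by rw [h2]
      simp only [SimpleGraph.Walk.length_cons]
      omega
    · have t1 : H.dist a.2 c.2 ≤ 1 + H.dist b.2 c.2 := by
        calc H.dist a.2 c.2 ≤ H.dist a.2 b.2 + H.dist b.2 c.2 := hH.dist_triangle
        _ ≤ 1 + H.dist b.2 c.2 := by
            have : H.dist a.2 b.2 = 1 := (SimpleGraph.dist_eq_one_iff_adj).mpr h1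
            omega
      have : G.dist a.1 c.1 = G.dist b.1 c.1 := by rw [h2]
      simp only [SimpleGraph.Walk.length_cons]
      omega

lemma dist_boxProd (hG : G.Connected) (hH : H.Connected) (x₁ y₁ : α) (x₂ y₂ : β) :
    (G.boxProd H).dist (x₁, x₂) (y₁, y₂) = G.dist x₁ y₁ + H.dist x₂ y₂ := by
  refine le_antisymm (dist_boxProd_le (hG x₁ y₁) (hH x₂ y₂)) ?_
  have hreach : (G.boxProd H).Reachable (x₁, x₂) (y₁, y₂) := (hG.boxProd hH) _ _
  obtain ⟨w, hw⟩ := hreach.exists_walk_length_eq_dist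
  have h2 := le_walk_length_boxProd hG hH w
  rw [hw] at h2
  exact h2

end BoxProdDist

/-- The Petersen–star product graph. -/
abbrev PG (n : ℕ) : SimpleGraph ((Bool × ZMod 5) × Fin (n + 1)) :=
  (genPetersen 5 2).boxProd (starGraph n)

lemma distPG {n : ℕ} (x y : (Bool × ZMod 5) × Fin (n + 1)) :
    (PG n).dist x y = DP x.1 y.1 + DS x.2 y.2 := by
  obtain ⟨p, a⟩ := x
  obtain ⟨q, b⟩ := y
  rw [show (PG n).dist (p, a) (q, b) =
      (genPetersen 5 2).dist p q + (starGraph n).dist a b from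
    dist_boxProd petersen_connected (star_connected n) p q a b,
    petersen_dist, star_dist]

def jOf (p : Bool × ZMod 5) : ℕ :=
  if p = (false, 0) then 0 else if p = (false, 2) then 1 else if p = (false, 4) then 2
  else if p = (true, 1) then 3 else if p = (true, 0) then 4 else if p = (false, 1) then 5
  else if p = (false, 3) then 6 else if p = (true, 4) then 7 else if p = (true, 3) then 8
  else 9

def cRank (p : Bool × ZMod 5) : ℕ :=
  if p = (false, 3) then 0 else if p = (false, 0) then 1 else if p = (false, 2) then 2
  else if p = (false, 4) then 3 else if p = (false, 1) then 4 else if p = (true, 0) then 5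
  else if p = (true, 1) then 6 else if p = (true, 2) then 7 else if p = (true, 3) then 8
  else 9

def cv : ℕ → ℕ
  | 0 => 0 | 1 => 1 | 2 => 2 | 3 => 0 | 4 => 1 | 5 => 2 | 6 => 0 | 7 => 1 | 8 => 2
  | _ => 0

lemma cv_le : ∀ j, cv j ≤ 2 := by
  intro j
  rcases j with _|_|_|_|_|_|_|_|_|j <;> simp [cv]

lemma jOf_lt (p : Bool × ZMod 5) : jOf p < 10 := by revert p; decide
lemma jOf_inj : ∀ p q : Bool × ZMod 5, jOf p = jOf q → p = q := by decide
lemma cRank_le (p : Bool × ZMod 5) : cRank p ≤ 9 := by revert p; decide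
lemma cRank_inj : ∀ p q : Bool × ZMod 5, cRank p = cRank q → p = q := by decide
lemma DP_le (p q : Bool × ZMod 5) : DP p q ≤ 2 := by unfold DP; split_ifs <;> omega
lemma DP_pos (p q : Bool × ZMod 5) (h : p ≠ q) : 1 ≤ DP p q := by
  rw [DP, if_neg h]; split_ifs <;> omega
lemma hA1 : ∀ p q : Bool × ZMod 5, jOf q = (jOf p + 1) % 10 → DP p q = 2 := by decide
lemma hA3 : ∀ p q : Bool × ZMod 5, jOf q = (jOf p + 3) % 10 → DP p q = 2 := by decide
lemma hC : ∀ p q : Bool × ZMod 5, cRank q = cRank p + 1 → DP p q = 2 := by decide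
lemma hI1 : ∀ p q : Bool × ZMod 5, cRank p = 0 → jOf q = 0 → DP p q = 2 := by decide
lemma hI2 : ∀ p q : Bool × ZMod 5, cRank p = 0 → jOf q = 1 → 1 ≤ DP p q := by decide
lemma hI3 : ∀ p q : Bool × ZMod 5, jOf p = 9 → cRank q = 1 → DP p q = 2 := by decide
lemma hI4 : ∀ p q : Bool × ZMod 5, jOf p = 8 → cRank q = 1 → 1 ≤ DP p q := by decide

lemma DS_le {n : ℕ} (a b : Fin (n + 1)) : DS a b ≤ 2 := by unfold DS; split_ifs <;> omega
lemma DS_zero_left {n : ℕ} (b : Fin (n + 1)) (hb : b ≠ 0) : DS 0 b = 1 := by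
  rw [DS, if_neg (fun h => hb h.symm), if_pos (Or.inl rfl)]
lemma DS_zero_right {n : ℕ} (a : Fin (n + 1)) (ha : a ≠ 0) : DS a 0 = 1 := by
  rw [DS, if_neg ha, if_pos (Or.inr rfl)]
lemma DS_self {n : ℕ} (a : Fin (n + 1)) : DS a a = 0 := by rw [DS, if_pos rfl]
lemma DS_two {n : ℕ} (a b : Fin (n + 1)) (ha : a ≠ 0) (hb : b ≠ 0) (hab : a ≠ b) :
    DS a b = 2 := by
  rw [DS, if_neg hab, if_neg (by tauto)]

def tOf (n : ℕ) (j : ℕ) (a : Fin (n + 1)) : ℕ := (a.val - 1 + (n - cv j)) % n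

def lab (n : ℕ) (x : (Bool × ZMod 5) × Fin (n + 1)) : ℕ :=
  if x.2 = (0 : Fin (n + 1)) then (if cRank x.1 = 0 then 0 else 10 * n + 3 * cRank x.1)
  else 2 + 10 * tOf n (jOf x.1) x.2 + jOf x.1

lemma lab_center {n : ℕ} (p : Bool × ZMod 5) :
    lab n (p, 0) = if cRank p = 0 then 0 else 10 * n + 3 * cRank p := by
  rw [lab, if_pos rfl]

lemma lab_leaf {n : ℕ} (p : Bool × ZMod 5) (a : Fin (n + 1)) (ha : a ≠ 0) :
    lab n (p, a) = 2 + 10 * tOf n (jOf p) a + jOf p := by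
  rw [lab, if_neg ha]

lemma val_pos {n : ℕ} (a : Fin (n + 1)) (ha : a ≠ 0) : 1 ≤ a.val := by
  rcases Nat.eq_zero_or_pos a.val with h | h
  · exact absurd (Fin.ext h) ha
  · exact h

lemma tOf_lt {n : ℕ} (hn : 3 ≤ n) (j : ℕ) (a : Fin (n + 1)) : tOf n j a < n :=
  Nat.mod_lt _ (by omega)

lemma tOf_key {n : ℕ} (hn : 3 ≤ n) (a : Fin (n + 1)) (ha : a ≠ 0) (j : ℕ) :
    (tOf n j a + cv j) % n = a.val - 1 := by
  have h1 : a.val ≤ n := by have := a.isLt; omega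
  have h2 : 1 ≤ a.val := val_pos a ha
  have h3 : cv j ≤ 2 := cv_le j
  rw [tOf, Nat.mod_add_mod]
  have : a.val - 1 + (n - cv j) + cv j = a.val - 1 + n := by omega
  rw [this, Nat.add_mod_right, Nat.mod_eq_of_lt (by omega)]

lemma mod_ne {n x y : ℕ} (hne : x ≠ y) (h2 : x < y + n) (h3 : y < x + n) :
    x % n ≠ y % n := by
  intro h
  rcases Nat.lt_or_ge x y with hlt | hge
  · have hd : n ∣ y - x := (Nat.modEq_iff_dvd' hlt.le).mp h
    have := Nat.le_of_dvd (by omega) hd; omega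
  · have hlt' : y < x := by omega
    have hd : n ∣ x - y := (Nat.modEq_iff_dvd' hlt'.le).mp h.symm
    have := Nat.le_of_dvd (by omega) hd; omega

lemma leaf_ne {n : ℕ} (a b : Fin (n + 1)) (ha : a ≠ 0) (hb : b ≠ 0)
    {x y : ℕ} (hxa : x % n = a.val - 1) (hyb : y % n = b.val - 1)
    (hne : x ≠ y) (h2 : x < y + n) (h3 : y < x + n) : a ≠ b := by
  intro h
  subst h
  exact mod_ne hne h2 h3 (hxa.trans hyb.symm)

lemma lab_main {n : ℕ} (hn : 3 ≤ n) (u v : (Bool × ZMod 5) × Fin (n + 1))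
    (hlt : lab n u < lab n v) :
    5 ≤ (lab n v - lab n u) + DP u.1 v.1 + DS u.2 v.2 := by
  obtain ⟨p, a⟩ := u
  obtain ⟨q, b⟩ := v
  simp only
  by_cases ha : a = 0 <;> by_cases hb : b = 0
  -- Case A : both centers
  · subst ha; subst hb
    rw [lab_center, lab_center] at hlt ⊢
    rw [DS_self]
    have hk := cRank_le p
    have hl := cRank_le q
    by_cases hk0 : cRank p = 0
    · rw [if_pos hk0] at hlt ⊢
      by_cases hl0 : cRank q = 0
      · rw [if_pos hl0] at hlt; omega
      · rw [if_neg hl0] at hlt ⊢; omega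
    · rw [if_neg hk0] at hlt ⊢
      by_cases hl0 : cRank q = 0
      · rw [if_pos hl0] at hlt; omega
      · rw [if_neg hl0] at hlt ⊢
        by_cases hsucc : cRank q = cRank p + 1
        · have := hC p q hsucc; omega
        · have := DP_le p q; omega
  -- Case B : center to leaf
  · subst ha
    rw [lab_center] at hlt ⊢
    rw [lab_leaf q b hb] at hlt ⊢
    rw [DS_zero_left b hb]
    have htb := tOf_lt hn (jOf q) b
    have hjb := jOf_lt q
    by_cases hk0 : cRank p = 0
    · rw [if_pos hk0] at hlt ⊢
      by_cases hbig : 2 ≤ 10 * tOf n (jOf q) b + jOf q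
      · have := DP_le p q; omega
      · have hq0 : tOf n (jOf q) b = 0 := by omega
        by_cases hj0 : jOf q = 0
        · have := hI1 p q hk0 hj0; omega
        · have hj1 : jOf q = 1 := by omega
          have := hI2 p q hk0 hj1; omega
    · rw [if_neg hk0] at hlt ⊢
      have := cRank_le p
      omega
  -- Case C : leaf to center
  · subst hb
    rw [lab_leaf p a ha] at hlt ⊢
    rw [lab_center] at hlt ⊢
    rw [DS_zero_right a ha]
    have hta := tOf_lt hn (jOf p) a
    have hja := jOf_lt p
    by_cases hl0 : cRank q = 0
    · rw [if_pos hl0] at hlt; omega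
    · rw [if_neg hl0] at hlt ⊢
      have hl := cRank_le q
      by_cases hl1 : cRank q = 1
      · by_cases hbig : 10 * tOf n (jOf p) a + jOf p ≤ 10 * n - 4
        · have := DP_le p q; omega
        · have hta' : tOf n (jOf p) a = n - 1 := by omega
          have hj789 : jOf p = 7 ∨ jOf p = 8 ∨ jOf p = 9 := by omega
          rcases hj789 with hj | hj | hj
          · have := DP_le p q; omega
          · have := hI4 p q hj hl1; omega
          · have := hI3 p q hj hl1; omega
      · have := DP_le p q; omega
  -- Case D : both leaves
  · rw [lab_leaf p a ha, lab_leaf q b hb] at hlt ⊢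
    have hja := jOf_lt p
    have hjb := jOf_lt q
    have hta := tOf_lt hn (jOf p) a
    have htb := tOf_lt hn (jOf q) b
    have hka := tOf_key hn a ha (jOf p)
    have hkb := tOf_key hn b hb (jOf q)
    set ja := jOf p with hjadef
    set jb := jOf q with hjbdef
    set ta := tOf n ja a with htadef
    set tb := tOf n jb b with htbdef
    clear_value ja jb ta tb
    have hd : (10 * tb + jb) - (10 * ta + ja) = 1 ∨ (10 * tb + jb) - (10 * ta + ja) = 2 ∨
        (10 * tb + jb) - (10 * ta + ja) = 3 ∨ (10 * tb + jb) - (10 * ta + ja) = 4 ∨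
        5 ≤ (10 * tb + jb) - (10 * ta + ja) := by omega
    rcases hd with hd | hd | hd | hd | hd
    -- gap 1
    · have hDP : DP p q = 2 := hA1 p q (by rw [← hjbdef, ← hjadef]; omega)
      have hsplit : (tb = ta ∧ jb = ja + 1 ∧ ja ≤ 8) ∨ (tb = ta + 1 ∧ ja = 9 ∧ jb = 0) := by
        omega
      have hab : a ≠ b := by
        rcases hsplit with ⟨h1, h2, h3⟩ | ⟨h1, h2, h3⟩
        · subst h1; subst h2
          interval_cases ja <;>
            exact leaf_ne a b ha hb hka hkb (by simp only [cv]; omega) (by simp only [cv]; omega)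
              (by simp only [cv]; omega)
        · subst h2; subst h3; subst h1
          exact leaf_ne a b ha hb hka hkb (by simp only [cv]; omega) (by simp only [cv]; omega)
            (by simp only [cv]; omega)
      have hDS : DS a b = 2 := DS_two a b ha hb hab
      omega
    -- gap 2
    · have hpq : p ≠ q := by
        intro h
        have hjj : jOf p = jOf q := by rw [h]
        omega
      have hDP := DP_pos p q hpq
      have hsplit : (tb = ta ∧ jb = ja + 2 ∧ ja ≤ 7) ∨ (tb = ta + 1 ∧ ja = 8 ∧ jb = 0) ∨
          (tb = ta + 1 ∧ ja = 9 ∧ jb = 1) := by omega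
      have hab : a ≠ b := by
        rcases hsplit with ⟨h1, h2, h3⟩ | ⟨h1, h2, h3⟩ | ⟨h1, h2, h3⟩
        · subst h1; subst h2
          interval_cases ja <;>
            exact leaf_ne a b ha hb hka hkb (by simp only [cv]; omega) (by simp only [cv]; omega)
              (by simp only [cv]; omega)
        · subst h2; subst h3; subst h1
          exact leaf_ne a b ha hb hka hkb (by simp only [cv]; omega) (by simp only [cv]; omega)
            (by simp only [cv]; omega)
        · subst h2; subst h3; subst h1
          exact leaf_ne a b ha hb hka hkb (by simp only [cv]; omega) (by simp only [cv]; omega)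
            (by simp only [cv]; omega)
      have hDS : DS a b = 2 := DS_two a b ha hb hab
      omega
    -- gap 3
    · have hDP : DP p q = 2 := hA3 p q (by rw [← hjbdef, ← hjadef]; omega)
      omega
    -- gap 4
    · by_cases hpq : p = q
      · have hjj : jOf p = jOf q := by rw [hpq]
        omega
      · have := DP_pos p q hpq
        omega
    -- gap ≥ 5
    · omega


lemma diam_le (n : ℕ) : graphDiam (PG n) ≤ 4 := by
  apply Finset.sup_le
  intro x _
  rw [distPG]
  have h1 := DP_le x.1.1 x.2.1
  have h2 := DS_le x.1.2 x.2.2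
  omega

lemma diam_eq {n : ℕ} (hn : 3 ≤ n) : graphDiam (PG n) = 4 := by
  refine le_antisymm (diam_le n) ?_
  have hA1 : (1 : ℕ) < n + 1 := by omega
  have hA2 : (2 : ℕ) < n + 1 := by omega
  set A1 : Fin (n + 1) := ⟨1, hA1⟩ with hA1def
  set A2 : Fin (n + 1) := ⟨2, hA2⟩ with hA2def
  have h1 : A1 ≠ 0 := by simp [hA1def, Fin.ext_iff]
  have h2 : A2 ≠ 0 := by simp [hA2def, Fin.ext_iff]
  have h12 : A1 ≠ A2 := by simp [hA1def, hA2def, Fin.ext_iff]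
  have hdist : (PG n).dist (((false, 0) : Bool × ZMod 5), A1)
      (((false, 2) : Bool × ZMod 5), A2) = 4 := by
    rw [distPG]
    have hDP : DP (false, (0 : ZMod 5)) (false, (2 : ZMod 5)) = 2 := by decide
    have hDS : DS A1 A2 = 2 := DS_two _ _ h1 h2 h12
    simp only at hDP hDS ⊢
    omega
  calc (4 : ℕ) = (PG n).dist (((false, 0) : Bool × ZMod 5), A1)
        (((false, 2) : Bool × ZMod 5), A2) := hdist.symm
    _ ≤ graphDiam (PG n) := by
        unfold graphDiam
        exact Finset.le_sup (f := fun p : (((Bool × ZMod 5) × Fin (n + 1)) ×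
            ((Bool × ZMod 5) × Fin (n + 1))) => (PG n).dist p.1 p.2)
          (Finset.mem_univ ((((false, 0) : Bool × ZMod 5), A1),
            (((false, 2) : Bool × ZMod 5), A2)))

lemma lab_le {n : ℕ} (hn : 3 ≤ n) (x : (Bool × ZMod 5) × Fin (n + 1)) :
    lab n x ≤ 10 * n + 27 := by
  obtain ⟨p, a⟩ := x
  by_cases ha : a = 0
  · subst ha
    rw [lab_center]
    have := cRank_le p
    split_ifs <;> omega
  · rw [lab_leaf p a ha]
    have := tOf_lt hn (jOf p) a
    have := jOf_lt p
    omega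

lemma lab_inj {n : ℕ} (hn : 3 ≤ n) (u v : (Bool × ZMod 5) × Fin (n + 1))
    (h : lab n u = lab n v) : u = v := by
  obtain ⟨p, a⟩ := u
  obtain ⟨q, b⟩ := v
  by_cases ha : a = 0 <;> by_cases hb : b = 0
  · subst ha; subst hb
    rw [lab_center, lab_center] at h
    have hk := cRank_le p
    have hl := cRank_le q
    have hkl : cRank p = cRank q := by
      by_cases hk0 : cRank p = 0 <;> by_cases hl0 : cRank q = 0 <;>
        simp [hk0, hl0] at h <;> omega
    rw [cRank_inj p q hkl]
  · exfalso
    subst ha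
    rw [lab_center, lab_leaf q b hb] at h
    have := tOf_lt hn (jOf q) b
    have := jOf_lt q
    have := cRank_le p
    split_ifs at h <;> omega
  · exfalso
    subst hb
    rw [lab_center, lab_leaf p a ha] at h
    have := tOf_lt hn (jOf p) a
    have := jOf_lt p
    have := cRank_le q
    split_ifs at h <;> omega
  · rw [lab_leaf p a ha, lab_leaf q b hb] at h
    have h1 := tOf_lt hn (jOf p) a
    have h2 := tOf_lt hn (jOf q) b
    have h3 := jOf_lt p
    have h4 := jOf_lt q
    have hj : jOf p = jOf q := by omega
    have hpq : p = q := jOf_inj p q hj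
    subst hpq
    have ht : tOf n (jOf p) a = tOf n (jOf p) b := by omega
    have hka := tOf_key hn a ha (jOf p)
    have hkb := tOf_key hn b hb (jOf p)
    rw [ht] at hka
    have hv : a.val = b.val := by
      have := val_pos a ha
      have := val_pos b hb
      omega
    rw [Fin.ext hv]

lemma DP_comm : ∀ p q : Bool × ZMod 5, DP p q = DP q p := by decide

lemma DS_comm {n : ℕ} (a b : Fin (n + 1)) : DS a b = DS b a := by
  unfold DS
  by_cases h : a = b
  · subst h; rfl
  · have h' : ¬ b = a := fun hh => h hh.symm
    rw [if_neg h, if_neg h']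
    by_cases haz : a = 0 <;> by_cases hbz : b = 0 <;> simp [haz, hbz]

lemma lab_isRadio {n : ℕ} (hn : 3 ≤ n) : IsRadioLabeling (PG n) (lab n) := by
  intro u v huv
  rw [diam_eq hn, distPG]
  rcases lt_trichotomy (lab n u) (lab n v) with h | h | h
  · have h5 := lab_main hn u v h
    have habs : |(lab n u : ℤ) - lab n v| = (lab n v : ℤ) - lab n u := by
      rw [abs_sub_comm]
      exact abs_of_nonneg (by push_cast; omega)
    rw [habs]
    push_cast
    omega
  · exact absurd (lab_inj hn u v h) huv
  · have h5 := lab_main hn v u h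
    have habs : |(lab n u : ℤ) - lab n v| = (lab n u : ℤ) - lab n v :=
      abs_of_nonneg (by push_cast; omega)
    rw [habs, DP_comm u.1 v.1, DS_comm u.2 v.2]
    push_cast
    omega

lemma lab_span {n : ℕ} (hn : 3 ≤ n) : radioSpan (lab n) = 10 * n + 27 := by
  unfold radioSpan
  apply le_antisymm
  · apply Finset.sup_le
    intro x _
    have := lab_le hn x.1
    omega
  · have hbot : lab n ((false, 3), (0 : Fin (n + 1))) = 0 := by
      rw [lab_center, if_pos (by decide)]
    have htop : lab n ((true, 4), (0 : Fin (n + 1))) = 10 * n + 27 := by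
      rw [lab_center, if_neg (by decide)]
      have : cRank (true, 4) = 9 := by decide
      rw [this]
    calc 10 * n + 27 = lab n (((true, 4) : Bool × ZMod 5), (0 : Fin (n + 1)))
          - lab n (((false, 3) : Bool × ZMod 5), (0 : Fin (n + 1))) := by
            rw [hbot, htop]
            omega
    _ ≤ _ := Finset.le_sup (f := fun p : (((Bool × ZMod 5) × Fin (n + 1)) ×
          ((Bool × ZMod 5) × Fin (n + 1))) => lab n p.1 - lab n p.2)
        (Finset.mem_univ ((((true, 4) : Bool × ZMod 5), (0 : Fin (n + 1))),
          (((false, 3) : Bool × ZMod 5), (0 : Fin (n + 1)))))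

lemma dist_center_bound {n : ℕ} (u v : (Bool × ZMod 5) × Fin (n + 1)) :
    (PG n).dist u v + (if u.2 = 0 then 1 else 0) + (if v.2 = 0 then 1 else 0) ≤ 4 := by
  obtain ⟨p, a⟩ := u
  obtain ⟨q, b⟩ := v
  rw [distPG]
  simp only
  have hDP := DP_le p q
  by_cases ha : a = 0 <;> by_cases hb : b = 0
  · subst ha; subst hb
    rw [DS_self, if_pos rfl]
    omega
  · subst ha
    rw [if_pos rfl, if_neg hb, DS_zero_left b hb]
    omega
  · subst hb
    rw [if_neg ha, if_pos rfl, DS_zero_right a ha]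
    omega
  · rw [if_neg ha, if_neg hb]
    have := DS_le a b
    omega

lemma radio_lower {n : ℕ} (hn : 3 ≤ n) (f : (Bool × ZMod 5) × Fin (n + 1) → ℕ)
    (hf : IsRadioLabeling (PG n) f) : 10 * n + 27 ≤ radioSpan f := by
  classical
  have hdle : ∀ u v : (Bool × ZMod 5) × Fin (n + 1), (PG n).dist u v ≤ 4 := by
    intro u v
    rw [distPG]
    have := DP_le u.1 v.1
    have := DS_le u.2 v.2
    omega
  have hinj : Function.Injective f := by
    intro u v h
    by_contra hne
    have h2 := hf u v hne
    rw [diam_eq hn, h] at h2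
    simp only [sub_self, abs_zero] at h2
    have h3 := hdle u v
    have h4 : ((PG n).dist u v : ℤ) ≤ 4 := by exact_mod_cast h3
    omega
  set N := 10 * n + 10 with hNdef
  have hcard : Fintype.card ((Bool × ZMod 5) × Fin (n + 1)) = N := by
    rw [Fintype.card_prod, Fintype.card_prod, Fintype.card_bool, ZMod.card,
      Fintype.card_fin]
    omega
  have hfcard : (Finset.univ.image f).card = N := by
    rw [Finset.card_image_of_injective _ hinj, Finset.card_univ, hcard]
  let e := (Finset.univ.image f).orderIsoOfFin hfcard
  let g : (Bool × ZMod 5) × Fin (n + 1) → {x // x ∈ Finset.univ.image f} := fun v =>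
    ⟨f v, Finset.mem_image_of_mem f (Finset.mem_univ v)⟩
  have hgbij : Function.Bijective g := by
    constructor
    · intro u v h
      exact hinj (congrArg Subtype.val h)
    · rintro ⟨x, hx⟩
      obtain ⟨v, -, hv⟩ := Finset.mem_image.mp hx
      exact ⟨v, Subtype.ext hv⟩
  let σ : Fin N ≃ (Bool × ZMod 5) × Fin (n + 1) :=
    e.toEquiv.trans (Equiv.ofBijective g hgbij).symm
  have hfσ : ∀ i, f (σ i) = (e i : ℕ) := by
    intro i
    have h1 : g (σ i) = e i := (Equiv.ofBijective g hgbij).apply_symm_apply (e i)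
    exact congrArg Subtype.val h1
  have hmono : ∀ i j : Fin N, i < j → f (σ i) < f (σ j) := by
    intro i j hij
    rw [hfσ, hfσ]
    exact_mod_cast e.strictMono hij
  let F : ℕ → ℤ := fun i => if h : i < N then (f (σ ⟨i, h⟩) : ℤ) else 0
  let W : ℕ → ℤ := fun i => if h : i < N then (if (σ ⟨i, h⟩).2 = 0 then 1 else 0) else 0
  have hW1 : ∀ i, W i ≤ 1 := by
    intro i
    simp only [W]
    split_ifs <;> omega
  have hW0 : ∀ i, 0 ≤ W i := by
    intro i
    simp only [W]
    split_ifs <;> omega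
  have hgap : ∀ i, i + 1 < N → F i + 1 + W i + W (i + 1) ≤ F (i + 1) := by
    intro i hi1
    have hi : i < N := by omega
    have hne : σ ⟨i, hi⟩ ≠ σ ⟨i + 1, hi1⟩ := by
      intro h
      have := σ.injective h
      simp [Fin.ext_iff] at this
    have hlt : f (σ ⟨i, hi⟩) < f (σ ⟨i + 1, hi1⟩) :=
      hmono _ _ (by simp [Fin.lt_def])
    have h2 := hf _ _ hne
    rw [diam_eq hn] at h2
    have habs : |(f (σ ⟨i, hi⟩) : ℤ) - f (σ ⟨i + 1, hi1⟩)| =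
        (f (σ ⟨i + 1, hi1⟩) : ℤ) - f (σ ⟨i, hi⟩) := by
      rw [abs_sub_comm]
      exact abs_of_nonneg (by push_cast; omega)
    rw [habs] at h2
    have hdb := dist_center_bound (σ ⟨i, hi⟩) (σ ⟨i + 1, hi1⟩)
    simp only [F, W, dif_pos hi, dif_pos hi1]
    have hdb' : ((PG n).dist (σ ⟨i, hi⟩) (σ ⟨i + 1, hi1⟩) : ℤ)
        + (if (σ ⟨i, hi⟩).2 = 0 then (1 : ℤ) else 0)
        + (if (σ ⟨i + 1, hi1⟩).2 = 0 then (1 : ℤ) else 0) ≤ 4 := by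
      split_ifs at hdb ⊢ <;> push_cast <;> omega
    split_ifs at hdb' ⊢ <;> omega
  -- total of W
  have hWsum : ∑ i ∈ Finset.range N, W i = 10 := by
    rw [Finset.sum_range fun i => W i]
    have hstep : ∀ i : Fin N, W i.val = (if (σ i).2 = 0 then (1 : ℤ) else 0) := by
      intro i
      simp only [W, dif_pos i.isLt]
    rw [Finset.sum_congr rfl fun i _ => hstep i]
    rw [Equiv.sum_comp σ (fun v => if v.2 = 0 then (1 : ℤ) else 0)]
    rw [Fintype.sum_prod_type]
    have hinner : ∀ p : Bool × ZMod 5,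
        (∑ a : Fin (n + 1), if a = 0 then (1 : ℤ) else 0) = 1 := by
      intro p
      rw [Finset.sum_ite_eq' Finset.univ (0 : Fin (n + 1)) (fun _ => (1 : ℤ))]
      simp
    simp only [hinner]
    simp [Finset.card_univ]
  have htel : ∑ i ∈ Finset.range (N - 1), (F (i + 1) - F i) = F (N - 1) - F 0 :=
    Finset.sum_range_sub F (N - 1)
  have hsum_le : ∑ i ∈ Finset.range (N - 1), (1 + W i + W (i + 1)) ≤
      ∑ i ∈ Finset.range (N - 1), (F (i + 1) - F i) := by
    apply Finset.sum_le_sum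
    intro i hi
    have hi' : i + 1 < N := by
      have := Finset.mem_range.mp hi
      omega
    have := hgap i hi'
    omega
  have hsplit : ∑ i ∈ Finset.range (N - 1), (1 + W i + W (i + 1)) =
      (N - 1 : ℕ) + (∑ i ∈ Finset.range (N - 1), W i)
        + (∑ i ∈ Finset.range (N - 1), W (i + 1)) := by
    rw [Finset.sum_add_distrib, Finset.sum_add_distrib, Finset.sum_const,
      Finset.card_range]
    push_cast
    ring
  have hN1 : N - 1 + 1 = N := by omega
  have hsum1 : ∑ i ∈ Finset.range (N - 1), W i = 10 - W (N - 1) := by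
    have := Finset.sum_range_succ W (N - 1)
    rw [hN1, hWsum] at this
    omega
  have hsum2 : ∑ i ∈ Finset.range (N - 1), W (i + 1) = 10 - W 0 := by
    have := Finset.sum_range_succ' W (N - 1)
    rw [hN1, hWsum] at this
    omega
  have hWlast := hW1 (N - 1)
  have hW0' := hW1 0
  have hNval : ((N - 1 : ℕ) : ℤ) = 10 * n + 9 := by omega
  have hmain : (10 * n + 27 : ℤ) ≤ F (N - 1) - F 0 := by
    rw [← htel]
    calc (10 * n + 27 : ℤ) ≤ (N - 1 : ℕ) + (10 - W (N - 1)) + (10 - W 0) := by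
          rw [hNval]
          omega
    _ = ∑ i ∈ Finset.range (N - 1), (1 + W i + W (i + 1)) := by
          rw [hsplit, hsum1, hsum2]
    _ ≤ _ := hsum_le
  have hN0 : 0 < N := by omega
  have hNlast : N - 1 < N := by omega
  have hF0 : F 0 = (f (σ ⟨0, hN0⟩) : ℤ) := by simp only [F, dif_pos hN0]
  have hFlast : F (N - 1) = (f (σ ⟨N - 1, hNlast⟩) : ℤ) := by
    simp only [F, dif_pos hNlast]
  have hspan : f (σ ⟨N - 1, hNlast⟩) - f (σ ⟨0, hN0⟩) ≤ radioSpan f := by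
    unfold radioSpan
    exact Finset.le_sup (f := fun p : (((Bool × ZMod 5) × Fin (n + 1)) ×
      ((Bool × ZMod 5) × Fin (n + 1))) => f p.1 - f p.2)
      (Finset.mem_univ (σ ⟨N - 1, hNlast⟩, σ ⟨0, hN0⟩))
  rw [hF0, hFlast] at hmain
  omega


/-- The radio number of the Cartesian product of the Petersen graph and the star `K_{1,n}`
(`n ≥ 3`): `rn(P_{5,2} □ K_{1,n}) = 10n + 27`. -/
theorem radioNumber_petersen_boxProd_star (n : ℕ) (hn : 3 ≤ n) :
    radioNumber ((genPetersen 5 2).boxProd (starGraph n)) = 10 * n + 27 := by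
  have hmem : (10 * n + 27) ∈
      {s : ℕ | ∃ f, IsRadioLabeling (PG n) f ∧ radioSpan f = s} :=
    ⟨lab n, lab_isRadio hn, lab_span hn⟩
  unfold radioNumber
  apply le_antisymm
  · exact Nat.sInf_le hmem
  · apply le_csInf ⟨_, hmem⟩
    rintro s ⟨f, hf, rfl⟩
    exact radio_lower hn f hf

end RadioPaper
end
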